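/- arXiv:1508.05646 — 2 statements merged into one kernel-verified Lean document; each statement's English description precedes it below -/
import Mathlib

section
/- With g = Σ_n g_n (equivalently g = sup_n g_n) as above and f not a.e. zero, there exist constants 0 < C_1 ≤ C_2 such that for all p ∈ [1,4), C_1 (4-p)^{-1/4} ≤ ‖g‖_p ≤ C_2 (4-p)^{-1/4}. In particular ‖g‖_p → ∞ as p → 4⁻, so g ∉ L^4(0,1). -/
/-
The pieces of `g` live on the disjoint intervals `(a (n+1), a n)` of length `Δ n`, so a change of
variables on each piece gives `‖g‖_p^p = C(β) ‖f‖_p^p ∑ n ^ (pβ - 4β - 1)`, where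
`∫ min(f, 1)^4 ≤ ‖f‖_p^p ≤ ∫ (1 + f^4)` uniformly in `p ∈ [1, 4]`. Comparing the series with
`∫_1^∞ x ^ (-r)` for `r = (4 - p)β + 1` shows that it is of order `1 / (4 - p)` for `p ∈ [1, 4)`,
and at `p = 4` it is the harmonic series. Taking `p`-th roots turns `(4 - p) ^ (-1/p)` into
`(4 - p) ^ (-1/4)` up to a bounded factor, because `t ^ t` is bounded above and below on `(0, 3]`.
-/

open MeasureTheory Set Filter Real Function

lemma setIntegral_comp_sub_div_Ioo (F : ℝ → ℝ) (b : ℝ) {D : ℝ} (hD : 0 < D) :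
    ∫ x in Ioo b (b + D), F ((x - b) / D) = D * ∫ x in Ioo 0 1, F x := by
  rw [← integral_Ioc_eq_integral_Ioo, ← integral_Ioc_eq_integral_Ioo,
    ← intervalIntegral.integral_of_le (by linarith), ← intervalIntegral.integral_of_le zero_le_one]
  simp [sub_div, hD.ne', add_div]

lemma integrableOn_comp_sub_div_Ioo {F : ℝ → ℝ} (hF : IntegrableOn F (Ioo 0 1)) (b : ℝ) {D : ℝ}
    (hD : 0 < D) : IntegrableOn (fun x => F ((x - b) / D)) (Ioo b (b + D)) := by
  rw [← intervalIntegrable_iff_integrableOn_Ioo_of_le (by linarith)] at hF ⊢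
  simpa [div_eq_mul_inv, mul_comm, hD.ne', add_comm] using
    (hF.comp_mul_left (c := D⁻¹)).comp_sub_right b

section IndicatorSum

variable {ι α M : Type*} [AddCommMonoid M] [TopologicalSpace M] {s : ι → Set α} {h : ι → α → M}
  {x : α}

lemma tsum_indicator_apply_of_mem (hs : Pairwise (Disjoint on s)) {i : ι} (hx : x ∈ s i) :
    ∑' n, (s n).indicator (h n) x = h i x := by
  rw [tsum_eq_single i fun n hn => indicator_of_notMem (disjoint_left.1 (hs hn.symm) hx) _]
  exact indicator_of_mem hx _

lemma tsum_indicator_apply_of_notMem (hx : x ∉ ⋃ n, s n) :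
    ∑' n, (s n).indicator (h n) x = 0 := by
  simp_all

end IndicatorSum

section SetIntegralUnion

variable {X : Type*} [MeasurableSpace X] {μ : Measure X} {s : ℕ → Set X} {S : Set X} {F : X → ℝ}

lemma integrableOn_of_summable_setIntegral (hS : MeasurableSet S)
    (hF₀ : ∀ x ∉ ⋃ n, s n, F x = 0) (hF : ∀ x, 0 ≤ F x) (hint : ∀ n, IntegrableOn F (s n) μ)
    (hsum : Summable fun n => ∫ x in s n, F x ∂μ) : IntegrableOn F S μ := by
  refine (integrableOn_iUnion_of_summable_integral_norm hint ?_).of_forall_sdiff_eq_zero hS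
    fun x hx => hF₀ x hx.2
  simpa only [norm_of_nonneg (hF _)] using hsum

lemma hasSum_setIntegral_of_integrableOn (hs : ∀ n, MeasurableSet (s n))
    (hd : Pairwise (Disjoint on s)) (hS : MeasurableSet S) (hsS : (⋃ n, s n) ⊆ S)
    (hF₀ : ∀ x ∉ ⋃ n, s n, F x = 0) (hF : IntegrableOn F S μ) :
    HasSum (fun n => ∫ x in s n, F x ∂μ) (∫ x in S, F x ∂μ) := by
  rw [setIntegral_eq_of_subset_of_forall_sdiff_eq_zero hS hsS fun x hx => hF₀ x hx.2]
  exact hasSum_integral_iUnion hs hd (hF.mono_set hsS)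

end SetIntegralUnion

lemma rpow_le_one_add_rpow {y p q : ℝ} (hy : 0 ≤ y) (hp : 0 ≤ p) (hpq : p ≤ q) :
    y ^ p ≤ 1 + y ^ q := by
  rcases le_total y 1 with h | h
  · linarith [rpow_le_one hy h hp, rpow_nonneg hy q]
  · linarith [rpow_le_rpow_of_exponent_le h hpq]

lemma min_one_rpow_le_rpow {y p q : ℝ} (hy : 0 ≤ y) (hp : 0 ≤ p) (hpq : p ≤ q) :
    min y 1 ^ q ≤ y ^ p := by
  rcases le_total y 1 with h | h
  · rw [min_eq_left h]
    exact rpow_le_rpow_of_exponent_ge' hy h hp hpq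
  · rw [min_eq_right h, one_rpow]
    exact one_le_rpow h hp

section RpowIntegral

variable {X : Type*} [MeasurableSpace X] {μ : Measure X} {f : X → ℝ} {p q : ℝ}

lemma integral_rpow_le_integral_one_add_rpow [IsFiniteMeasure μ] (hf : ∀ x, 0 ≤ f x)
    (hfp : Integrable (fun x => f x ^ p) μ) (hfq : Integrable (fun x => f x ^ q) μ) (hp : 0 ≤ p)
    (hpq : p ≤ q) : ∫ x, f x ^ p ∂μ ≤ ∫ x, (1 + f x ^ q) ∂μ :=
  integral_mono hfp ((integrable_const 1).add hfq) fun x => rpow_le_one_add_rpow (hf x) hp hpq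

lemma integral_min_one_rpow_le_integral_rpow (hf : ∀ x, 0 ≤ f x)
    (hfp : Integrable (fun x => f x ^ p) μ) (hp : 0 ≤ p) (hpq : p ≤ q) :
    ∫ x, min (f x) 1 ^ q ∂μ ≤ ∫ x, f x ^ p ∂μ :=
  integral_mono_of_nonneg
    (Eventually.of_forall fun x => rpow_nonneg (le_min (hf x) zero_le_one) q) hfp
    (Eventually.of_forall fun x => min_one_rpow_le_rpow (hf x) hp hpq)

lemma integral_min_one_rpow_pos [IsFiniteMeasure μ] (hf_meas : Measurable f) (hf : ∀ x, 0 ≤ f x)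
    (hf_ne : ¬ f =ᵐ[μ] 0) (hq : 0 < q) : 0 < ∫ x, min (f x) 1 ^ q ∂μ := by
  have hnn : ∀ x, 0 ≤ min (f x) 1 ^ q := fun x => rpow_nonneg (le_min (hf x) zero_le_one) q
  have hint : Integrable (fun x => min (f x) 1 ^ q) μ := by
    refine (integrable_const 1).mono'
      ((hf_meas.min measurable_const).pow_const q).aestronglyMeasurable
      (Eventually.of_forall fun x => ?_)
    rw [norm_of_nonneg (hnn x)]
    exact rpow_le_one (le_min (hf x) zero_le_one) (min_le_right _ _) hq.le
  refine (integral_nonneg hnn).lt_of_ne fun h => hf_ne ?_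
  filter_upwards [(integral_eq_zero_iff_of_nonneg hnn hint).1 h.symm] with x hx
  rw [Pi.zero_apply, rpow_eq_zero (le_min (hf x) zero_le_one) hq.ne'] at hx
  rcases min_eq_iff.1 hx with h | h
  · exact h.1
  · exact absurd h.1 one_ne_zero

end RpowIntegral

section PSeries

variable {r β p : ℝ}

-- The casts `((1 : ℕ) : ℝ)` match the integral-test lemmas `AntitoneOn.*_tsum_comp_add`.
lemma antitoneOn_rpow_neg_Ici_one (hr : 0 ≤ r) :
    AntitoneOn (fun x : ℝ => x ^ (-r)) (Ici ((1 : ℕ) : ℝ)) :=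
  (antitoneOn_rpow_Ioi_of_exponent_nonpos (neg_nonpos.2 hr)).mono (by simp [Ici_subset_Ioi])

lemma rpow_neg_nonneg_of_mem_Ioi_one (r : ℝ) : ∀ t ∈ Ioi ((1 : ℕ) : ℝ), 0 ≤ t ^ (-r) :=
  fun _ ht => rpow_nonneg (zero_le_one.trans (le_of_lt (by simpa using ht))) _

lemma integral_Ioi_one_rpow_neg (hr : 1 < r) :
    ∫ x in Ioi ((1 : ℕ) : ℝ), x ^ (-r) = 1 / (r - 1) := by
  rw [Nat.cast_one, integral_Ioi_rpow_of_lt (by linarith) zero_lt_one, one_rpow,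
    show -r + 1 = -(r - 1) by ring, div_neg, neg_div, neg_neg]

lemma summable_natCast_succ_rpow_neg (hr : 1 < r) :
    Summable fun n : ℕ => ((n + 1 : ℕ) : ℝ) ^ (-r) :=
  (summable_nat_add_iff 1).2 (summable_nat_rpow.2 (by linarith))

lemma one_div_sub_one_le_tsum_rpow_neg (hr : 1 < r) :
    1 / (r - 1) ≤ ∑' n : ℕ, ((n + 1 : ℕ) : ℝ) ^ (-r) := by
  rw [← integral_Ioi_one_rpow_neg hr]
  exact (antitoneOn_rpow_neg_Ici_one (by linarith)).integral_le_tsum_comp_add 1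
    (summable_nat_rpow.2 (by linarith)) (rpow_neg_nonneg_of_mem_Ioi_one r)

lemma tsum_rpow_neg_le_one_add (hr : 1 < r) :
    ∑' n : ℕ, ((n + 1 : ℕ) : ℝ) ^ (-r) ≤ 1 + 1 / (r - 1) := by
  have h := (antitoneOn_rpow_neg_Ici_one (r := r) (by linarith)).tsum_comp_add_le_integral 1
    (integrableOn_Ioi_rpow_of_lt (by linarith) (by simp)) (rpow_neg_nonneg_of_mem_Ioi_one r)
  rw [integral_Ioi_one_rpow_neg hr] at h
  rw [(summable_natCast_succ_rpow_neg hr).tsum_eq_zero_add]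
  simpa using h

lemma one_div_div_le_tsum_rpow_neg (hβ : 0 < β) (hp : p < 4) :
    1 / β / (4 - p) ≤ ∑' n : ℕ, ((n + 1 : ℕ) : ℝ) ^ (-((4 - p) * β + 1)) := by
  rw [div_div, mul_comm β]
  have h := one_div_sub_one_le_tsum_rpow_neg (r := (4 - p) * β + 1)
    (by nlinarith [mul_pos (sub_pos.2 hp) hβ])
  rwa [add_sub_cancel_right] at h

lemma tsum_rpow_neg_le_div (hβ : 0 < β) (hp₁ : 1 ≤ p) (hp : p < 4) :
    ∑' n : ℕ, ((n + 1 : ℕ) : ℝ) ^ (-((4 - p) * β + 1)) ≤ (3 * β + 1) / β / (4 - p) := by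
  have ht : 0 < (4 - p) * β := mul_pos (sub_pos.2 hp) hβ
  refine (tsum_rpow_neg_le_one_add (by linarith)).trans ?_
  rw [add_sub_cancel_right, div_div, mul_comm β, le_div_iff₀ ht, add_mul, one_div_mul_cancel ht.ne']
  nlinarith

end PSeries

section RootBounds

variable {A p q s : ℝ}

lemma min_one_le_rpow (hA : 0 ≤ A) (hs₀ : 0 ≤ s) (hs₁ : s ≤ 1) : min A 1 ≤ A ^ s := by
  rcases le_total A 1 with h | h
  · exact (min_le_left _ _).trans (self_le_rpow_of_le_one hA h hs₁)
  · exact (min_le_right _ _).trans (one_le_rpow h hs₀)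

lemma rpow_le_max_one (hA : 0 ≤ A) (hs₀ : 0 ≤ s) (hs₁ : s ≤ 1) : A ^ s ≤ max A 1 := by
  rcases le_total A 1 with h | h
  · exact (rpow_le_one hA h hs₀).trans (le_max_right _ _)
  · exact (rpow_le_self_of_one_le h hs₁).trans (le_max_left _ _)

lemma one_div_sub_one_div_eq (hp : p ≠ 0) (hq : q ≠ 0) :
    1 / q - 1 / p = -((q - p) / (p * q)) := by
  field_simp
  ring

-- With `t = q - p`: `t ^ (1/q - 1/p) = exp (-(t log t) / (p q))` and `t - 1 ≤ t log t ≤ t (t - 1)`.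
lemma rpow_one_div_sub_one_div_le_exp (hp : 1 ≤ p) (hpq : p < q) :
    (q - p) ^ (1 / q - 1 / p) ≤ exp (1 / q) := by
  have ht : 0 < q - p := sub_pos.2 hpq
  have hq : 0 < q := by linarith
  have hlog : q - p - 1 ≤ (q - p) * log (q - p) := by
    have := mul_le_mul_of_nonneg_left (one_sub_inv_le_log_of_pos ht) ht.le
    rwa [mul_sub, mul_one, mul_inv_cancel₀ ht.ne'] at this
  rw [rpow_def_of_pos ht, exp_le_exp, one_div_sub_one_div_eq (by linarith) hq.ne', mul_neg,
    ← mul_div_assoc, neg_le, ← neg_div, div_le_div_iff₀ hq (by positivity)]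
  nlinarith

lemma exp_neg_le_rpow_one_div_sub_one_div (hp : 1 ≤ p) (hpq : p < q) :
    exp (-q) ≤ (q - p) ^ (1 / q - 1 / p) := by
  have ht : 0 < q - p := sub_pos.2 hpq
  have hq : 0 < q := by linarith
  have hlog : (q - p) * log (q - p) ≤ (q - p) * (q - p - 1) :=
    mul_le_mul_of_nonneg_left (log_le_sub_one_of_pos ht) ht.le
  rw [rpow_def_of_pos ht, exp_le_exp, one_div_sub_one_div_eq (by linarith) hq.ne', mul_neg,
    ← mul_div_assoc, neg_le_neg_iff, div_le_iff₀ (by positivity)]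
  nlinarith [mul_le_mul_of_nonneg_right hp (sq_nonneg q), mul_pos (by linarith : (0 : ℝ) < p)
    (by linarith : 0 < q + (q - p))]

lemma rpow_neg_one_div_eq_mul {t : ℝ} (ht : 0 < t) :
    t ^ (-1 / p) = t ^ (1 / q - 1 / p) * t ^ (-1 / q) := by
  rw [← rpow_add ht]
  ring_nf

lemma div_rpow_one_div {t : ℝ} (hA : 0 ≤ A) (ht : 0 ≤ t) :
    (A / t) ^ (1 / p) = A ^ (1 / p) * t ^ (-1 / p) := by
  rw [div_rpow hA ht, neg_div, rpow_neg ht, div_eq_mul_inv]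

lemma le_rpow_one_div_of_div_le {X : ℝ} (hA : 0 < A) (hp : 1 ≤ p) (hpq : p < q)
    (h : A / (q - p) ≤ X) : min A 1 * exp (-q) * (q - p) ^ (-1 / q) ≤ X ^ (1 / p) := by
  have ht : 0 < q - p := sub_pos.2 hpq
  calc min A 1 * exp (-q) * (q - p) ^ (-1 / q)
      ≤ A ^ (1 / p) * ((q - p) ^ (1 / q - 1 / p) * (q - p) ^ (-1 / q)) := by
        rw [← mul_assoc]
        refine mul_le_mul_of_nonneg_right (mul_le_mul ?_ ?_ (exp_pos _).le (rpow_nonneg hA.le _))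
          (rpow_nonneg ht.le _)
        · exact min_one_le_rpow hA.le (by positivity) ((div_le_one (by linarith)).2 hp)
        · exact exp_neg_le_rpow_one_div_sub_one_div hp hpq
    _ = (A / (q - p)) ^ (1 / p) := by
        rw [div_rpow_one_div hA.le ht.le, rpow_neg_one_div_eq_mul (p := p) (q := q) ht]
    _ ≤ X ^ (1 / p) := by gcongr

lemma rpow_one_div_le_of_le_div {X : ℝ} (hA : 0 ≤ A) (hX : 0 ≤ X) (hp : 1 ≤ p) (hpq : p < q)
    (h : X ≤ A / (q - p)) : X ^ (1 / p) ≤ max A 1 * exp (1 / q) * (q - p) ^ (-1 / q) := by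
  have ht : 0 < q - p := sub_pos.2 hpq
  calc X ^ (1 / p) ≤ (A / (q - p)) ^ (1 / p) := by gcongr
    _ = A ^ (1 / p) * ((q - p) ^ (1 / q - 1 / p) * (q - p) ^ (-1 / q)) := by
        rw [div_rpow_one_div hA ht.le, rpow_neg_one_div_eq_mul (p := p) (q := q) ht]
    _ ≤ max A 1 * exp (1 / q) * (q - p) ^ (-1 / q) := by
        rw [← mul_assoc]
        refine mul_le_mul_of_nonneg_right (mul_le_mul ?_ ?_ (rpow_nonneg ht.le _)
          (hA.trans (le_max_left _ _))) (rpow_nonneg ht.le _)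
        · exact rpow_le_max_one hA (by positivity) ((div_le_one (by linarith)).2 hp)
        · exact rpow_one_div_sub_one_div_le_exp hp hpq

end RootBounds

lemma tsum_add_eq_tsum_succ_add_add {δ : ℕ → ℝ} (hδ : Summable δ) (n : ℕ) :
    ∑' m, δ (n + m) = ∑' m, δ (n + 1 + m) + δ n := by
  have h : Summable fun m => δ (n + m) := by
    simpa only [add_comm] using (summable_nat_add_iff n).2 hδ
  rw [h.tsum_eq_zero_add, add_zero, add_comm]
  exact congrArg (· + δ n) (tsum_congr fun m => congrArg δ (by omega))

noncomputable def bumpSum (b δ γ : ℕ → ℝ) (f : ℝ → ℝ) (x : ℝ) : ℝ :=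
  ∑' n, (Ioo (b (n + 1)) (b n)).indicator (fun y => γ n * f ((y - b (n + 1)) / δ n)) x

namespace bumpSum

variable {β Cβ p : ℝ} {b δ γ : ℕ → ℝ} {f : ℝ → ℝ}

lemma pairwise_disjoint (hb : ∀ n, b n = b (n + 1) + δ n) (hδ : ∀ n, 0 < δ n) :
    Pairwise (Disjoint on fun n => Ioo (b (n + 1)) (b n)) :=
  Antitone.pairwise_disjoint_on_Ioo_succ
    (antitone_nat_of_succ_le fun n => by linarith [hb n, hδ n])

lemma iUnion_Ioo_subset (hb : ∀ n, b n = b (n + 1) + δ n) (hδ : ∀ n, 0 < δ n)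
    (hb_nonneg : ∀ n, 0 ≤ b n) (hb₀ : b 0 ≤ 1) : (⋃ n, Ioo (b (n + 1)) (b n)) ⊆ Ioo 0 1 := by
  have hanti : Antitone b := antitone_nat_of_succ_le fun n => by linarith [hb n, hδ n]
  exact Set.iUnion_subset fun n =>
    Ioo_subset_Ioo (hb_nonneg _) ((hanti (Nat.zero_le n)).trans hb₀)

lemma nonneg (hγ : ∀ n, 0 ≤ γ n) (hf : ∀ x, 0 ≤ f x) (x : ℝ) : 0 ≤ bumpSum b δ γ f x :=
  tsum_nonneg fun n => indicator_nonneg (fun _ _ => mul_nonneg (hγ n) (hf _)) x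

lemma rpow_eqOn (hb : ∀ n, b n = b (n + 1) + δ n) (hδ : ∀ n, 0 < δ n) (hγ : ∀ n, 0 ≤ γ n)
    (hf : ∀ x, 0 ≤ f x) (p : ℝ) (N : ℕ) :
    EqOn (fun x => bumpSum b δ γ f x ^ p) (fun x => γ N ^ p * f ((x - b (N + 1)) / δ N) ^ p)
      (Ioo (b (N + 1)) (b N)) := fun x hx => by
  simp only [bumpSum, tsum_indicator_apply_of_mem (pairwise_disjoint hb hδ) hx]
  exact mul_rpow (hγ N) (hf _)

lemma rpow_eq_zero (hp : p ≠ 0) {x : ℝ} (hx : x ∉ ⋃ n, Ioo (b (n + 1)) (b n)) :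
    bumpSum b δ γ f x ^ p = 0 := by
  rw [bumpSum, tsum_indicator_apply_of_notMem hx, zero_rpow hp]

lemma integrableOn_rpow_Ioo (hb : ∀ n, b n = b (n + 1) + δ n) (hδ : ∀ n, 0 < δ n)
    (hγ : ∀ n, 0 ≤ γ n) (hf : ∀ x, 0 ≤ f x) (hfp : IntegrableOn (fun x => f x ^ p) (Ioo 0 1))
    (N : ℕ) : IntegrableOn (fun x => bumpSum b δ γ f x ^ p) (Ioo (b (N + 1)) (b N)) := by
  refine IntegrableOn.congr_fun ?_ (rpow_eqOn hb hδ hγ hf p N).symm measurableSet_Ioo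
  rw [hb N]
  exact (integrableOn_comp_sub_div_Ioo hfp _ (hδ N)).const_mul _

lemma setIntegral_rpow_Ioo (hb : ∀ n, b n = b (n + 1) + δ n) (hδ : ∀ n, 0 < δ n)
    (hγ : ∀ n, 0 ≤ γ n) (hf : ∀ x, 0 ≤ f x) (p : ℝ) (N : ℕ) :
    ∫ x in Ioo (b (N + 1)) (b N), bumpSum b δ γ f x ^ p
      = γ N ^ p * δ N * ∫ x in Ioo 0 1, f x ^ p := by
  rw [setIntegral_congr_fun measurableSet_Ioo (rpow_eqOn hb hδ hγ hf p N), integral_const_mul,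
    hb N, setIntegral_comp_sub_div_Ioo (fun y => f y ^ p) _ (hδ N), mul_assoc]

lemma integrableOn_rpow_of_summable (hb : ∀ n, b n = b (n + 1) + δ n) (hδ : ∀ n, 0 < δ n)
    (hγ : ∀ n, 0 ≤ γ n) (hf : ∀ x, 0 ≤ f x) (hp : p ≠ 0)
    (hfp : IntegrableOn (fun x => f x ^ p) (Ioo 0 1))
    (hsum : Summable fun n => γ n ^ p * δ n) :
    IntegrableOn (fun x => bumpSum b δ γ f x ^ p) (Ioo 0 1) :=
  integrableOn_of_summable_setIntegral measurableSet_Ioo (fun _ hx => rpow_eq_zero hp hx)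
    (fun x => rpow_nonneg (nonneg hγ hf x) p) (integrableOn_rpow_Ioo hb hδ hγ hf hfp) <| by
      simpa only [setIntegral_rpow_Ioo hb hδ hγ hf] using hsum.mul_right _

lemma hasSum_setIntegral_rpow (hb : ∀ n, b n = b (n + 1) + δ n) (hδ : ∀ n, 0 < δ n)
    (hb_nonneg : ∀ n, 0 ≤ b n) (hb₀ : b 0 ≤ 1) (hγ : ∀ n, 0 ≤ γ n) (hf : ∀ x, 0 ≤ f x)
    (hp : p ≠ 0) (hint : IntegrableOn (fun x => bumpSum b δ γ f x ^ p) (Ioo 0 1)) :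
    HasSum (fun n => γ n ^ p * δ n * ∫ x in Ioo 0 1, f x ^ p)
      (∫ x in Ioo 0 1, bumpSum b δ γ f x ^ p) := by
  simpa only [setIntegral_rpow_Ioo hb hδ hγ hf] using
    hasSum_setIntegral_of_integrableOn (fun _ => measurableSet_Ioo) (pairwise_disjoint hb hδ)
      measurableSet_Ioo (iUnion_Ioo_subset hb hδ hb_nonneg hb₀) (fun _ hx => rpow_eq_zero hp hx)
      hint

lemma rpow_mul_eq_of_power_weights (hδ : ∀ n, δ n = Cβ * ((n + 1 : ℕ) : ℝ) ^ (-(4 * β) - 1))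
    (hγ : ∀ n, γ n = ((n + 1 : ℕ) : ℝ) ^ β) (p : ℝ) (n : ℕ) :
    γ n ^ p * δ n = Cβ * ((n + 1 : ℕ) : ℝ) ^ (-((4 - p) * β + 1)) := by
  have hn : (0 : ℝ) < (n + 1 : ℕ) := by positivity
  rw [hγ, hδ, ← rpow_mul hn.le, mul_left_comm, ← rpow_add hn]
  ring_nf

lemma integral_rpow_eq_of_lt_four (hβ : 0 < β) (hCβ : 0 < Cβ)
    (hb : ∀ n, b n = b (n + 1) + δ n) (hb_nonneg : ∀ n, 0 ≤ b n) (hb₀ : b 0 ≤ 1)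
    (hδ : ∀ n, δ n = Cβ * ((n + 1 : ℕ) : ℝ) ^ (-(4 * β) - 1))
    (hγ : ∀ n, γ n = ((n + 1 : ℕ) : ℝ) ^ β) (hf : ∀ x, 0 ≤ f x) (hp : 0 < p) (hp₄ : p < 4)
    (hfp : IntegrableOn (fun x => f x ^ p) (Ioo 0 1)) :
    ∫ x in Ioo 0 1, bumpSum b δ γ f x ^ p
      = Cβ * (∫ x in Ioo 0 1, f x ^ p) * ∑' n : ℕ, ((n + 1 : ℕ) : ℝ) ^ (-((4 - p) * β + 1)) := by
  have hδ_pos : ∀ n, 0 < δ n := fun n => hδ n ▸ mul_pos hCβ (by positivity)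
  have hγ_nonneg : ∀ n, 0 ≤ γ n := fun n => hγ n ▸ by positivity
  have hsum : Summable fun n => γ n ^ p * δ n := by
    simpa only [rpow_mul_eq_of_power_weights hδ hγ] using (summable_natCast_succ_rpow_neg
      (by nlinarith [mul_pos (sub_pos.2 hp₄) hβ] : 1 < (4 - p) * β + 1)).mul_left Cβ
  have hint := integrableOn_rpow_of_summable hb hδ_pos hγ_nonneg hf hp.ne' hfp hsum
  rw [← (hasSum_setIntegral_rpow hb hδ_pos hb_nonneg hb₀ hγ_nonneg hf hp.ne' hint).tsum_eq]
  simp only [rpow_mul_eq_of_power_weights hδ hγ, tsum_mul_right, tsum_mul_left]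
  ring

lemma not_integrableOn_rpow_four (hCβ : 0 < Cβ)
    (hb : ∀ n, b n = b (n + 1) + δ n) (hb_nonneg : ∀ n, 0 ≤ b n) (hb₀ : b 0 ≤ 1)
    (hδ : ∀ n, δ n = Cβ * ((n + 1 : ℕ) : ℝ) ^ (-(4 * β) - 1))
    (hγ : ∀ n, γ n = ((n + 1 : ℕ) : ℝ) ^ β) (hf : ∀ x, 0 ≤ f x)
    (hK : 0 < ∫ x in Ioo 0 1, f x ^ (4 : ℝ)) :
    ¬ IntegrableOn (fun x => bumpSum b δ γ f x ^ (4 : ℝ)) (Ioo 0 1) := by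
  intro hint
  have hδ_pos : ∀ n, 0 < δ n := fun n => hδ n ▸ mul_pos hCβ (by positivity)
  have hγ_nonneg : ∀ n, 0 ≤ γ n := fun n => hγ n ▸ by positivity
  have h := (hasSum_setIntegral_rpow hb hδ_pos hb_nonneg hb₀ hγ_nonneg hf four_ne_zero
    hint).summable
  simp only [rpow_mul_eq_of_power_weights hδ hγ, sub_self, zero_mul, zero_add, rpow_neg_one,
    summable_mul_right_iff hK.ne', summable_mul_left_iff hCβ.ne'] at h
  exact not_summable_natCast_inv ((summable_nat_add_iff 1).1 h)

lemma integral_rpow_mem_Icc (hβ : 0 < β) (hCβ : 0 < Cβ)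
    (hb : ∀ n, b n = b (n + 1) + δ n) (hb_nonneg : ∀ n, 0 ≤ b n) (hb₀ : b 0 ≤ 1)
    (hδ : ∀ n, δ n = Cβ * ((n + 1 : ℕ) : ℝ) ^ (-(4 * β) - 1))
    (hγ : ∀ n, γ n = ((n + 1 : ℕ) : ℝ) ^ β) (hf : ∀ x, 0 ≤ f x) (hp₁ : 1 ≤ p) (hp₄ : p < 4)
    (hfp : IntegrableOn (fun x => f x ^ p) (Ioo 0 1)) {K₀ K₁ : ℝ}
    (hK₀ : K₀ ≤ ∫ x in Ioo 0 1, f x ^ p) (hK₁ : ∫ x in Ioo 0 1, f x ^ p ≤ K₁) :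
    Cβ * K₀ / β / (4 - p) ≤ ∫ x in Ioo 0 1, bumpSum b δ γ f x ^ p ∧
      ∫ x in Ioo 0 1, bumpSum b δ γ f x ^ p ≤ Cβ * K₁ * (3 * β + 1) / β / (4 - p) := by
  have hK : 0 ≤ ∫ x in Ioo 0 1, f x ^ p :=
    setIntegral_nonneg measurableSet_Ioo fun x _ => rpow_nonneg (hf x) p
  have hZ₀ := one_div_div_le_tsum_rpow_neg hβ hp₄
  have hZ₁ := tsum_rpow_neg_le_div hβ hp₁ hp₄
  have h4p : 0 < 4 - p := sub_pos.2 hp₄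
  rw [integral_rpow_eq_of_lt_four hβ hCβ hb hb_nonneg hb₀ hδ hγ hf (by linarith) hp₄ hfp]
  constructor
  · calc Cβ * K₀ / β / (4 - p) = Cβ * K₀ * (1 / β / (4 - p)) := by ring
      _ ≤ _ := mul_le_mul (by gcongr) hZ₀ (by positivity) (by positivity)
  · calc _ ≤ Cβ * K₁ * ((3 * β + 1) / β / (4 - p)) :=
          mul_le_mul (by gcongr) hZ₁ (hZ₀.trans' (by positivity)) (by nlinarith)
      _ = _ := by ring

theorem exists_norm_bounds (hβ : 0 < β) (hCβ : 0 < Cβ)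
    (hb : ∀ n, b n = b (n + 1) + δ n) (hb_nonneg : ∀ n, 0 ≤ b n) (hb₀ : b 0 ≤ 1)
    (hδ : ∀ n, δ n = Cβ * ((n + 1 : ℕ) : ℝ) ^ (-(4 * β) - 1))
    (hγ : ∀ n, γ n = ((n + 1 : ℕ) : ℝ) ^ β) (hf_meas : Measurable f) (hf : ∀ x, 0 ≤ f x)
    (hf4 : IntegrableOn (fun x => f x ^ (4 : ℝ)) (Ioo 0 1))
    (hf_ne : ¬ f =ᵐ[volume.restrict (Ioo (0 : ℝ) 1)] 0) :
    ∃ C₁ C₂ : ℝ, 0 < C₁ ∧ C₁ ≤ C₂ ∧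
      (∀ p ∈ Ico (1 : ℝ) 4,
        C₁ * (4 - p) ^ (-(1 : ℝ) / 4) ≤ (∫ x in Ioo 0 1, bumpSum b δ γ f x ^ p) ^ (1 / p) ∧
        (∫ x in Ioo 0 1, bumpSum b δ γ f x ^ p) ^ (1 / p) ≤ C₂ * (4 - p) ^ (-(1 : ℝ) / 4)) ∧
      ¬ MemLp (bumpSum b δ γ f) 4 (volume.restrict (Ioo 0 1)) := by
  have hγ_nonneg : ∀ n, 0 ≤ γ n := fun n => hγ n ▸ by positivity
  have hfp (p : ℝ) (hp : 0 ≤ p) (hp₄ : p ≤ 4) : IntegrableOn (fun x => f x ^ p) (Ioo 0 1) := by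
    simpa only [IntegrableOn, norm_of_nonneg (hf _)] using integrable_norm_rpow_of_le
      hf_meas.aestronglyMeasurable hp zero_le_four hp₄ (by simpa only [norm_of_nonneg (hf _)])
  set K₀ := ∫ x in Ioo 0 1, min (f x) 1 ^ (4 : ℝ)
  set K₁ := ∫ x in Ioo 0 1, (1 + f x ^ (4 : ℝ))
  have hK₀ : 0 < K₀ := integral_min_one_rpow_pos hf_meas hf hf_ne four_pos
  have hK₁ : 0 ≤ K₁ := integral_nonneg fun x => add_nonneg zero_le_one (rpow_nonneg (hf x) _)
  have hbounds (p : ℝ) (hp : p ∈ Ico (1 : ℝ) 4) :=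
    have hp₀ : 0 ≤ p := zero_le_one.trans hp.1
    integral_rpow_mem_Icc hβ hCβ hb hb_nonneg hb₀ hδ hγ hf hp.1 hp.2 (hfp p hp₀ hp.2.le)
      (integral_min_one_rpow_le_integral_rpow hf (hfp p hp₀ hp.2.le) hp₀ hp.2.le)
      (integral_rpow_le_integral_one_add_rpow hf (hfp p hp₀ hp.2.le) hf4 hp₀ hp.2.le)
  refine ⟨min (Cβ * K₀ / β) 1 * exp (-4), max (Cβ * K₁ * (3 * β + 1) / β) 1 * exp (1 / 4),
    by positivity, ?_, fun p hp => ⟨?_, ?_⟩, fun hmem => ?_⟩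
  · exact (mul_le_one₀ (min_le_right _ _) (exp_pos _).le (exp_le_one_iff.2 (by norm_num))).trans
      (one_le_mul_of_one_le_of_one_le (le_max_right _ _) (one_le_exp (by norm_num)))
  · exact le_rpow_one_div_of_div_le (by positivity) hp.1 hp.2 (hbounds p hp).1
  · exact rpow_one_div_le_of_le_div (by positivity)
      (setIntegral_nonneg measurableSet_Ioo fun x _ => rpow_nonneg (nonneg hγ_nonneg hf x) _)
      hp.1 hp.2 (hbounds p hp).2
  · refine not_integrableOn_rpow_four hCβ hb hb_nonneg hb₀ hδ hγ hf
      (hK₀.trans_le (integral_min_one_rpow_le_integral_rpow hf hf4 zero_le_four le_rfl)) ?_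
    simpa [IntegrableOn, norm_of_nonneg (nonneg hγ_nonneg hf _)] using
      hmem.integrable_norm_rpow four_ne_zero ENNReal.ofNat_ne_top

end bumpSum

/-- `‖g‖_p ≍ (4-p)^{-1/4}` for `p ∈ [1,4)`; in particular `g ∉ L⁴(0,1)`. -/
theorem stmt_7
    (β Cβ : ℝ) (hβ : 0 < β)
    (f : ℝ → ℝ) (hf_meas : Measurable f) (hf_nonneg : ∀ x, 0 ≤ f x)
    (hf4 : MeasureTheory.IntegrableOn (fun x => |f x| ^ (4 : ℝ)) (Set.Ioo 0 1))
    (Δ a c : ℕ → ℝ)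
    (hΔ : ∀ n, 1 ≤ n → Δ n = Cβ * (n : ℝ) ^ (-(4 * β) - 1))
    (hsum : ∑' n : ℕ, Δ (n + 1) = 1)
    (ha : ∀ n, 1 ≤ n → a n = ∑' m : ℕ, Δ (n + m))
    (hc : ∀ n, c n = (n : ℝ) ^ β)
    (g : ℕ → ℝ → ℝ)
    (hg : ∀ n x, g n x =
      Set.indicator (Set.Ioo (a (n + 1)) (a n))
        (fun y => c n * f ((y - a (n + 1)) / Δ n)) x)
    (hf_ne : ¬ f =ᵐ[volume.restrict (Set.Ioo (0 : ℝ) 1)] 0) :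
    ∃ C₁ C₂ : ℝ, 0 < C₁ ∧ C₁ ≤ C₂ ∧
      (∀ p ∈ Set.Ico (1 : ℝ) 4,
        C₁ * (4 - p) ^ (-(1 : ℝ) / 4)
            ≤ (∫ x in Set.Ioo (0 : ℝ) 1, (∑' n : ℕ, g (n + 1) x) ^ p) ^ (1 / p) ∧
        (∫ x in Set.Ioo (0 : ℝ) 1, (∑' n : ℕ, g (n + 1) x) ^ p) ^ (1 / p)
            ≤ C₂ * (4 - p) ^ (-(1 : ℝ) / 4)) ∧
      ¬ MemLp (fun x => ∑' n : ℕ, g (n + 1) x) 4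
          (volume.restrict (Set.Ioo (0 : ℝ) 1)) := by
  have hδ (n : ℕ) : Δ (n + 1) = Cβ * ((n + 1 : ℕ) : ℝ) ^ (-(4 * β) - 1) := hΔ (n + 1) n.succ_pos
  have hδ_summable : Summable fun n => Δ (n + 1) := by
    by_contra h
    exact one_ne_zero (hsum.symm.trans (tsum_eq_zero_of_not_summable h))
  have hCβ : 0 < Cβ := by
    by_contra! h
    linarith [tsum_nonpos (L := .unconditional ℕ) fun n =>
      (hδ n).trans_le (mul_nonpos_of_nonpos_of_nonneg h (by positivity))]
  have htail (n : ℕ) : a (n + 1) = ∑' m, Δ (n + m + 1) :=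
    (ha (n + 1) n.succ_pos).trans (tsum_congr fun m => congrArg Δ (by omega))
  have hG (x : ℝ) : ∑' n, g (n + 1) x
      = bumpSum (fun n => a (n + 1)) (fun n => Δ (n + 1)) (fun n => c (n + 1)) f x := by
    simp only [hg, bumpSum]
  simp only [hG]
  refine bumpSum.exists_norm_bounds hβ hCβ (fun n => ?_) (fun n => ?_) ?_ hδ (fun n => hc (n + 1))
    hf_meas hf_nonneg (by simpa only [abs_of_nonneg (hf_nonneg _)] using hf4) hf_ne
  · rw [htail, htail]
    exact tsum_add_eq_tsum_succ_add_add hδ_summable n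
  · rw [htail]
    exact tsum_nonneg fun m => (hδ (n + m)).symm ▸ by positivity
  · simp [htail, hsum]
end

section
/- There exists a sequence (g_n) of random variables on ((0,1), Lebesgue) such that: (i) sup_n ‖g_n‖_4 < ∞; (ii) g_n → 0 a.e. (so the process θ(1/n) = g_n, θ(0) = 0 is a.e. continuous on the compact set T = {1/n} ∪ {0}); but (iii) sup_n |g_n| ∉ L^4, and indeed ‖sup_n |g_n|‖_p ≍ (4-p)^{-1/4} as p → 4⁻. -/
/-!
Take `g_n = x^{-1/4}` restricted to the dyadic interval `(2^{-n-1}, 2^{-n})`. There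
`g_n ≤ 2^{(n+1)/4}` on a set of measure `2^{-n-1}`, so `‖g_n‖_4 ≤ 1`, and `g_n x = 0` as soon as
`2^{-n} < x`. The intervals cover `(0,1)` up to a countable set, so `sup_n |g_n| = x^{-1/4}` a.e.,
whose `L^p` norm is `(1 - p/4)^{-1/p}`: infinite at `p = 4`, and equal to `(4-p)^{-1/4}` times
`exp((log 4 - (4-p) log(4-p)/4)/p)`, whose exponent stays in `[-4, 4]` for `p ∈ [1, 4)` because
`t log t` is bounded on `(0, 3]`.
-/

open MeasureTheory ENNReal Set Filter Topology

theorem exists_mem_Ioo_succ_of_notMem_range {α : Type*} [LinearOrder α] {a : ℕ → α} {x : α}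
    (h0 : x < a 0) (hlt : ∃ n, a n < x) (hx : x ∉ range a) :
    ∃ n, x ∈ Ioo (a (n + 1)) (a n) := by
  classical
  have hle : ∃ n, a n ≤ x := hlt.imp fun _ => le_of_lt
  obtain ⟨m, hm⟩ : ∃ m, Nat.find hle = m + 1 :=
    Nat.exists_eq_succ_of_ne_zero fun h => (Nat.find_spec hle).not_gt (h ▸ h0)
  have hfind : a (m + 1) ≤ x := hm ▸ Nat.find_spec hle
  exact ⟨m, hfind.lt_of_ne fun h => hx ⟨_, h⟩, not_le.1 (Nat.find_min hle (by omega))⟩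

section IndicatorIoo

variable {a : ℕ → ℝ} {f : ℝ → ℝ} {x : ℝ}

theorem ciSup_abs_indicator_Ioo_succ_eq {n : ℕ} (hx : x ∈ Ioo (a (n + 1)) (a n)) :
    ⨆ m, |(Ioo (a (m + 1)) (a m)).indicator f x| = |f x| := by
  have hle : ∀ m, |(Ioo (a (m + 1)) (a m)).indicator f x| ≤ |f x| := fun _ => by
    simpa only [Real.norm_eq_abs] using norm_indicator_le_norm_self f x
  refine le_antisymm (ciSup_le hle) ?_
  calc |f x| = |(Ioo (a (n + 1)) (a n)).indicator f x| := by rw [indicator_of_mem hx]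
    _ ≤ _ := le_ciSup ⟨_, forall_mem_range.2 hle⟩ n

theorem tendsto_indicator_Ioo_succ_zero (ha : Tendsto a atTop (𝓝 0)) (hx : 0 < x) :
    Tendsto (fun n => (Ioo (a (n + 1)) (a n)).indicator f x) atTop (𝓝 0) := by
  refine tendsto_const_nhds.congr' ?_
  filter_upwards [ha.eventually_lt_const hx] with n hn
  exact (indicator_of_notMem (fun hmem => hmem.2.not_gt hn) _).symm

end IndicatorIoo

theorem eLpNorm_rpow_neg_Ioo_zero_one {s p : ℝ} (hp : 0 < p) (hsp : s * p < 1) :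
    eLpNorm (fun x : ℝ => x ^ (-s)) (ENNReal.ofReal p) (volume.restrict (Ioo 0 1)) =
      ENNReal.ofReal ((1 - s * p)⁻¹ ^ p⁻¹) := by
  have hint : ∫⁻ x in Ioo (0 : ℝ) 1, ‖x ^ (-s)‖ₑ ^ p = ENNReal.ofReal (1 - s * p)⁻¹ := by
    rw [setLIntegral_congr_fun measurableSet_Ioo fun x hx => by
      rw [Real.enorm_eq_ofReal (Real.rpow_nonneg hx.1.le _),
        ENNReal.ofReal_rpow_of_nonneg (Real.rpow_nonneg hx.1.le _) hp.le,
        ← Real.rpow_mul hx.1.le]]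
    have hr : -1 < -s * p := by linarith
    rw [← ofReal_integral_eq_lintegral_ofReal
      ((intervalIntegral.integrableOn_Ioo_rpow_iff zero_lt_one).2 hr)
      ((ae_restrict_mem measurableSet_Ioo).mono fun x hx => Real.rpow_nonneg hx.1.le _),
      ← integral_Ioc_eq_integral_Ioo, ← intervalIntegral.integral_of_le zero_le_one,
      integral_rpow (.inl hr), Real.one_rpow, Real.zero_rpow (by linarith)]
    congr 1
    field_simp
    ring
  rw [eLpNorm_eq_lintegral_rpow_enorm_toReal (by simpa using hp) ofReal_ne_top,
    toReal_ofReal hp.le, hint, ENNReal.ofReal_rpow_of_nonneg (by simp; linarith) (by positivity),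
    one_div]

theorem not_memLp_rpow_neg_Ioo_zero_one {s p : ℝ} (hp : 0 < p) (hsp : 1 ≤ s * p) :
    ¬ MemLp (fun x : ℝ => x ^ (-s)) (ENNReal.ofReal p) (volume.restrict (Ioo 0 1)) := by
  intro h
  have hint : IntegrableOn (fun x : ℝ => x ^ (-s * p)) (Ioo 0 1) := by
    refine (h.integrable_norm_rpow (by simpa using hp) ofReal_ne_top).congr ?_
    filter_upwards [ae_restrict_mem measurableSet_Ioo] with x hx
    rw [toReal_ofReal hp.le, Real.norm_of_nonneg (Real.rpow_nonneg hx.1.le _),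
      ← Real.rpow_mul hx.1.le]
  have := (intervalIntegral.integrableOn_Ioo_rpow_iff zero_lt_one).1 hint
  linarith

theorem eLpNorm_indicator_Ioo_rpow_neg_le {a b s : ℝ} (ha : 0 < a) (hs : 0 ≤ s) (p : ℝ≥0∞) :
    eLpNorm ((Ioo a b).indicator fun x => x ^ (-s)) p volume ≤
      volume (Ioo a b) ^ p.toReal⁻¹ * ENNReal.ofReal (a ^ (-s)) := by
  rw [eLpNorm_indicator_eq_eLpNorm_restrict measurableSet_Ioo]
  refine (eLpNorm_le_of_ae_bound ?_).trans_eq (by rw [Measure.restrict_apply_univ])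
  filter_upwards [ae_restrict_mem measurableSet_Ioo] with x hx
  rw [Real.norm_of_nonneg (Real.rpow_nonneg (ha.trans hx.1).le _)]
  exact Real.rpow_le_rpow_of_nonpos ha hx.1.le (by linarith)

theorem rpow_inv_one_sub_inv_mul_eq {p q : ℝ} (hp : 0 < p) (hpq : p < q) :
    (1 - q⁻¹ * p)⁻¹ ^ p⁻¹ =
      (q - p) ^ (-q⁻¹) * Real.exp ((Real.log q - (q - p) * Real.log (q - p) / q) / p) := by
  have hq : 0 < q := hp.trans hpq
  have hqp : 0 < q - p := by linarith
  have h1 : (1 - q⁻¹ * p)⁻¹ = q / (q - p) := by field_simp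
  rw [h1, Real.rpow_def_of_pos (by positivity), Real.rpow_def_of_pos hqp, ← Real.exp_add,
    Real.log_div hq.ne' hqp.ne']
  congr 1
  field_simp
  ring

theorem neg_one_le_mul_log {t : ℝ} (ht : 0 < t) : -1 ≤ t * Real.log t := by
  rcases le_or_gt t 1 with h | h
  · rw [mul_comm]
    linarith [neg_abs_le (Real.log t * t), Real.abs_log_mul_self_lt t ht h]
  · linarith [Real.mul_log_nonneg h.le]

theorem abs_log_four_sub_mul_log_div_le {p : ℝ} (hp : p ∈ Ico (1 : ℝ) 4) :
    |(Real.log 4 - (4 - p) * Real.log (4 - p) / 4) / p| ≤ 4 := by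
  obtain ⟨hp1, hp4⟩ := hp
  have ht : 0 < 4 - p := by linarith
  have hlog4_nonneg : 0 ≤ Real.log 4 := Real.log_nonneg (by norm_num)
  have hlog4_le : Real.log 4 ≤ 4 - 1 := Real.log_le_sub_one_of_pos (by norm_num)
  have hmul : (4 - p) * Real.log (4 - p) ≤ (4 - p) * (4 - p - 1) :=
    mul_le_mul_of_nonneg_left (Real.log_le_sub_one_of_pos ht) ht.le
  have hnum : |Real.log 4 - (4 - p) * Real.log (4 - p) / 4| ≤ 4 := by
    rw [abs_le]; constructor <;> nlinarith [neg_one_le_mul_log ht]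
  rw [abs_div, abs_of_pos (by linarith : 0 < p), div_le_iff₀ (by linarith)]
  linarith

theorem tendsto_inv_two_pow : Tendsto (fun n : ℕ => (2 : ℝ)⁻¹ ^ n) atTop (𝓝 0) :=
  _root_.tendsto_pow_atTop_nhds_zero_of_lt_one (by norm_num) (by norm_num)

noncomputable def dyadicPiece (n : ℕ) : ℝ → ℝ :=
  (Ioo ((2 : ℝ)⁻¹ ^ (n + 1)) (2⁻¹ ^ n)).indicator fun x => x ^ (-(4 : ℝ)⁻¹)

theorem measurable_dyadicPiece (n : ℕ) : Measurable (dyadicPiece n) :=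
  (by fun_prop : Measurable fun x : ℝ => x ^ (-(4 : ℝ)⁻¹)).indicator measurableSet_Ioo

theorem eLpNorm_dyadicPiece_le_one (n : ℕ) : eLpNorm (dyadicPiece n) 4 volume ≤ 1 := by
  have ha : (0 : ℝ) < 2⁻¹ ^ (n + 1) := by positivity
  refine (eLpNorm_indicator_Ioo_rpow_neg_le ha (by norm_num) 4).trans_eq ?_
  rw [Real.volume_Ioo, show (2 : ℝ)⁻¹ ^ n - 2⁻¹ ^ (n + 1) = 2⁻¹ ^ (n + 1) by ring,
    toReal_ofNat, ENNReal.ofReal_rpow_of_pos ha, ← ENNReal.ofReal_mul (by positivity),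
    ← Real.rpow_add ha, add_neg_cancel, Real.rpow_zero, ENNReal.ofReal_one]

theorem tendsto_dyadicPiece {x : ℝ} (hx : 0 < x) :
    Tendsto (fun n => dyadicPiece n x) atTop (𝓝 0) :=
  tendsto_indicator_Ioo_succ_zero tendsto_inv_two_pow hx

theorem iSup_abs_dyadicPiece_ae_eq :
    (fun x => ⨆ n, |dyadicPiece n x|) =ᵐ[volume.restrict (Ioo 0 1)]
      fun x => x ^ (-(4 : ℝ)⁻¹) := by
  have hnull : ∀ᵐ x : ℝ, x ∉ range fun n : ℕ => (2 : ℝ)⁻¹ ^ n :=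
    measure_eq_zero_iff_ae_notMem.mp ((countable_range _).measure_zero _)
  filter_upwards [ae_restrict_mem measurableSet_Ioo, ae_restrict_of_ae hnull] with x hx hxa
  have hlt : ∃ n, (2 : ℝ)⁻¹ ^ n < x := (tendsto_inv_two_pow.eventually_lt_const hx.1).exists
  obtain ⟨n, hn⟩ := exists_mem_Ioo_succ_of_notMem_range (by simpa using hx.2) hlt hxa
  unfold dyadicPiece
  rw [ciSup_abs_indicator_Ioo_succ_eq (a := fun n => (2 : ℝ)⁻¹ ^ n) hn,
    abs_of_nonneg (Real.rpow_nonneg hx.1.le _)]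

/-- Main counterexample: a sequence `(g_n)` on `((0,1), Lebesgue)` bounded in
`L⁴`, with `g_n → 0` a.e., but `sup_n |g_n| ∉ L⁴`; indeed
`‖sup_n |g_n|‖_p ≍ (4-p)^{-1/4}` as `p → 4⁻`. -/
theorem stmt_11 :
    ∃ g : ℕ → ℝ → ℝ,
      (∀ n, Measurable (g n)) ∧
      (⨆ n, eLpNorm (g n) 4 (volume.restrict (Set.Ioo (0 : ℝ) 1))) < ⊤ ∧
      (∀ᵐ x ∂(volume.restrict (Set.Ioo (0 : ℝ) 1)),
        Filter.Tendsto (fun n => g n x) Filter.atTop (nhds 0)) ∧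
      ¬ MemLp (fun x => ⨆ n, |g n x|) 4 (volume.restrict (Set.Ioo (0 : ℝ) 1)) ∧
      ∃ C₁ C₂ : ℝ, 0 < C₁ ∧ C₁ ≤ C₂ ∧
        ∀ p ∈ Set.Ico (1 : ℝ) 4,
          ENNReal.ofReal (C₁ * (4 - p) ^ (-(1 : ℝ) / 4))
              ≤ eLpNorm (fun x => ⨆ n, |g n x|) (ENNReal.ofReal p)
                  (volume.restrict (Set.Ioo (0 : ℝ) 1)) ∧
          eLpNorm (fun x => ⨆ n, |g n x|) (ENNReal.ofReal p)
              (volume.restrict (Set.Ioo (0 : ℝ) 1))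
            ≤ ENNReal.ofReal (C₂ * (4 - p) ^ (-(1 : ℝ) / 4)) := by
  refine ⟨dyadicPiece, measurable_dyadicPiece, ?_, ?_, ?_, Real.exp (-4), Real.exp 4,
    Real.exp_pos _, Real.exp_le_exp.2 (by norm_num), fun p hp => ?_⟩
  · refine (iSup_le fun n => ?_).trans_lt one_lt_top
    exact (eLpNorm_mono_measure _ Measure.restrict_le_self).trans (eLpNorm_dyadicPiece_le_one n)
  · filter_upwards [ae_restrict_mem measurableSet_Ioo] with x hx using tendsto_dyadicPiece hx.1
  · rw [memLp_congr_ae iSup_abs_dyadicPiece_ae_eq, ← ofReal_ofNat]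
    exact not_memLp_rpow_neg_Ioo_zero_one (by norm_num) (by norm_num)
  · have hp0 : 0 < p := by linarith [hp.1]
    rw [eLpNorm_congr_ae iSup_abs_dyadicPiece_ae_eq,
      eLpNorm_rpow_neg_Ioo_zero_one hp0 (by linarith [hp.2]),
      rpow_inv_one_sub_inv_mul_eq hp0 hp.2, neg_div, one_div]
    obtain ⟨hlower, hupper⟩ := abs_le.1 (abs_log_four_sub_mul_log_div_le hp)
    have hpow : 0 ≤ (4 - p) ^ (-(4 : ℝ)⁻¹) := Real.rpow_nonneg (by linarith [hp.2]) _
    exact ⟨ofReal_le_ofReal (by rw [mul_comm]; gcongr),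
      ofReal_le_ofReal (by rw [mul_comm]; gcongr)⟩
end
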